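/- The space C([0,1]) of continuous real-valued functions on [0,1] has no nontrivial M-projections: every M-projection on C([0,1]) is either 0 or the identity. -/
import Mathlib


def IsMProj {X : Type*} [NormedAddCommGroup X] [NormedSpace ℝ X]
    (π : X →L[ℝ] X) : Prop :=
  π.comp π = π ∧ ∀ x, ‖x‖ = max ‖π x‖ ‖x - π x‖

/-- `C([0,1])` has no nontrivial M-projections. -/
theorem no_nontrivial_mproj_C01
    (π : C(Set.Icc (0:ℝ) 1, ℝ) →L[ℝ] C(Set.Icc (0:ℝ) 1, ℝ))
    (hπ : IsMProj π) :
    π = 0 ∨ π = ContinuousLinearMap.id ℝ C(Set.Icc (0:ℝ) 1, ℝ) := by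
  obtain ⟨hidem, hnorm⟩ := hπ
  have hpp : ∀ f : C(Set.Icc (0:ℝ) 1, ℝ), π (π f) = π f := by
    intro f
    have := ContinuousLinearMap.ext_iff.mp hidem f
    simpa using this
  have hπle : ∀ f : C(Set.Icc (0:ℝ) 1, ℝ), ‖π f‖ ≤ ‖f‖ := fun f => by
    rw [hnorm f]; exact le_max_left _ _
  have hσle : ∀ f : C(Set.Icc (0:ℝ) 1, ℝ), ‖f - π f‖ ≤ ‖f‖ := fun f => by
    rw [hnorm f]; exact le_max_right _ _
  -- Core inequality
  have core : ∀ (t : Set.Icc (0:ℝ) 1) (f g : C(Set.Icc (0:ℝ) 1, ℝ)),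
      ‖f‖ ≤ 1 → ‖g‖ ≤ 1 → (π f) t + (g - π g) t ≤ 1 := by
    intro t f g hf hg
    set w := π f + (g - π g) with hw
    have hπw : π w = π f := by
      simp [hw, map_add, map_sub, hpp]
    have hσw : w - π w = g - π g := by
      rw [hπw, hw]; abel
    have hwnorm : ‖w‖ ≤ 1 := by
      rw [hnorm w, hσw, hπw]
      exact max_le ((hπle f).trans hf) ((hσle g).trans hg)
    have h1 : w t ≤ ‖w‖ := by
      have := w.norm_coe_le_norm t
      rw [Real.norm_eq_abs] at this
      exact (le_abs_self _).trans this
    have h2 : (π f) t + (g - π g) t = w t := by simp [hw]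
    linarith
  -- equal values at points where both are 1
  have eqstep : ∀ (t : Set.Icc (0:ℝ) 1) (f g : C(Set.Icc (0:ℝ) 1, ℝ)),
      ‖f‖ ≤ 1 → ‖g‖ ≤ 1 → f t = 1 → g t = 1 → (π f) t = (π g) t := by
    intro t f g hf hg hft hgt
    have h1 := core t f g hf hg
    have h2 := core t g f hg hf
    simp only [ContinuousMap.sub_apply, hft, hgt] at h1 h2
    linarith
  -- vanishing: if h t = 0 and ‖h‖ ≤ 1 then (π h) t = 0
  have zero1 : ∀ (t : Set.Icc (0:ℝ) 1) (h : C(Set.Icc (0:ℝ) 1, ℝ)),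
      ‖h‖ ≤ 1 → h t = 0 → (π h) t = 0 := by
    intro t h hh hht
    have habs : ∀ s : Set.Icc (0:ℝ) 1, |h s| ≤ 1 := by
      intro s
      have := h.norm_coe_le_norm s
      rw [Real.norm_eq_abs] at this
      linarith
    set f₂ : C(Set.Icc (0:ℝ) 1, ℝ) := 1 - |h| with hf₂
    have hf₂s : ∀ s, f₂ s = 1 - |h s| := by
      intro s; simp [hf₂]
    set f₁ : C(Set.Icc (0:ℝ) 1, ℝ) := f₂ + h with hf₁
    have hf₁s : ∀ s, f₁ s = 1 - |h s| + h s := by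
      intro s; simp [hf₁, hf₂s s]
    have hn1 : ‖f₁‖ ≤ 1 := by
      rw [ContinuousMap.norm_le _ zero_le_one]
      intro s
      rw [Real.norm_eq_abs, hf₁s s]
      have := habs s
      rcases le_or_gt 0 (h s) with hs | hs
      · rw [abs_of_nonneg hs, abs_le]
        constructor <;> linarith [le_abs_self (h s), abs_nonneg (h s)]
      · rw [abs_of_neg hs, abs_le]
        constructor <;> linarith [neg_abs_le (h s)]
    have hn2 : ‖f₂‖ ≤ 1 := by
      rw [ContinuousMap.norm_le _ zero_le_one]
      intro s
      rw [Real.norm_eq_abs, hf₂s s, abs_le]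
      have := habs s
      constructor <;> linarith [abs_nonneg (h s)]
    have ht1 : f₁ t = 1 := by rw [hf₁s t, hht]; simp
    have ht2 : f₂ t = 1 := by rw [hf₂s t, hht]; simp
    have heq := eqstep t f₁ f₂ hn1 hn2 ht1 ht2
    have hsub : f₁ - f₂ = h := by rw [hf₁]; abel
    have : π h = π f₁ - π f₂ := by rw [← hsub, map_sub]
    rw [this, ContinuousMap.sub_apply, heq, sub_self]
  -- vanishing in general
  have zero2 : ∀ (t : Set.Icc (0:ℝ) 1) (h : C(Set.Icc (0:ℝ) 1, ℝ)),
      h t = 0 → (π h) t = 0 := by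
    intro t h hht
    have hpos : (0:ℝ) < 1 + ‖h‖ := by positivity
    have hcpos : 0 < (1 + ‖h‖)⁻¹ := by positivity
    have hne : (1 + ‖h‖)⁻¹ ≠ 0 := ne_of_gt hcpos
    have hnorm' : ‖(1 + ‖h‖)⁻¹ • h‖ ≤ 1 := by
      have hns : ‖(1 + ‖h‖)⁻¹ • h‖ = ‖(1 + ‖h‖)⁻¹‖ * ‖h‖ := norm_smul ((1 + ‖h‖)⁻¹) h
      rw [hns, Real.norm_eq_abs, abs_of_pos hcpos, ← div_eq_inv_mul,
        div_le_one hpos]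
      linarith
    have hval : ((1 + ‖h‖)⁻¹ • h) t = 0 := by simp [hht]
    have h0 := zero1 t ((1 + ‖h‖)⁻¹ • h) hnorm' hval
    rw [map_smul] at h0
    simp only [ContinuousMap.smul_apply, smul_eq_mul] at h0
    rcases mul_eq_zero.mp h0 with h' | h'
    · exact absurd h' hne
    · exact h'
  -- multiplication formula
  have mult : ∀ (t : Set.Icc (0:ℝ) 1) (f : C(Set.Icc (0:ℝ) 1, ℝ)),
      (π f) t = (π 1) t * f t := by
    intro t f
    have hht : (f - f t • (1 : C(Set.Icc (0:ℝ) 1, ℝ))) t = 0 := by simp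
    have := zero2 t _ hht
    rw [map_sub, map_smul] at this
    simp only [ContinuousMap.sub_apply, ContinuousMap.smul_apply, smul_eq_mul] at this
    linarith
  have hidpt : ∀ t : Set.Icc (0:ℝ) 1, (π 1) t = 0 ∨ (π 1) t = 1 := by
    intro t
    have h1 : (π (π 1)) t = (π 1) t * (π 1) t := mult t (π 1)
    have h2 : π (π 1) = π 1 := hpp 1
    rw [h2] at h1
    have : (π 1) t * ((π 1) t - 1) = 0 := by nlinarith [h1]
    rcases mul_eq_zero.mp this with h' | h'
    · exact Or.inl h'
    · right; linarith
  -- connectedness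
  haveI : PreconnectedSpace (Set.Icc (0:ℝ) 1) :=
    Subtype.preconnectedSpace isPreconnected_Icc
  have hall : (∀ t : Set.Icc (0:ℝ) 1, (π 1) t = 0) ∨
      (∀ t : Set.Icc (0:ℝ) 1, (π 1) t = 1) := by
    by_contra hcon
    push_neg at hcon
    obtain ⟨⟨t₀, ht₀⟩, ⟨t₁, ht₁⟩⟩ := hcon
    have h₀ : (π 1) t₀ = 1 := (hidpt t₀).resolve_left ht₀
    have h₁ : (π 1) t₁ = 0 := (hidpt t₁).resolve_right ht₁
    have hsub : Set.Icc ((π 1) t₁) ((π 1) t₀) ⊆ Set.range (π 1) :=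
      intermediate_value_univ t₁ t₀ (π 1).continuous
    have hmem : (1/2 : ℝ) ∈ Set.Icc ((π 1) t₁) ((π 1) t₀) := by
      rw [h₀, h₁]; constructor <;> norm_num
    obtain ⟨s, hs⟩ := hsub hmem
    rcases hidpt s with h' | h' <;> rw [h'] at hs <;> norm_num at hs
  rcases hall with hz | ho
  · left
    ext f t
    have := mult t f
    rw [hz t] at this
    simpa using this
  · right
    ext f t
    have := mult t f
    rw [ho t] at this
    simpa using this
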